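/- Let q be a prime power and 3 ≤ k ≤ n/2. Suppose I ⊆ ℕ is a set of size k that is not an arithmetic progression, and T ⊆ F_q with |T| = n is such that every nonzero f ∈ V_I = span_{F_q}{x^i : i ∈ I} has at most k-1 roots in T, and additionally m_I = max I satisfies max(I+I) ≤ q-2 so that distinct monomials x^j, j ∈ I+I, restricted to T, together with n ≥ |I+I| evaluation points, yield a code of dimension |I+I|. Then the code C(T,I) = {(f(α))_{α∈T} : f ∈ V_I} is an [n,k] MDS code whose Schur square has dimension ≥ 2k, and hence C(T,I) is not a generalized Reed–Solomon code. -/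

import Mathlib

/-
The evaluations of the monomials `x^j`, `j ∈ I + I`, are products of two codewords of `C(T, I)`,
so the Schur square has dimension at least `|I + I|`. This is at least `2k` unless `I` is an
arithmetic progression: for the sorted elements `a₀ < ⋯ < a_{k-1}` of `I`, the chain
`a₀ + a₀ < a₀ + a₁ < a₁ + a₁ < a₁ + a₂ < ⋯` already gives `2k - 1` sums, and if these are all of
`I + I`, then `a_{i-1} + a_{i+1}`, which lies strictly between two consecutive ones, equals `2aᵢ`.
On the other hand, the Schur square of a GRS code of dimension `k` consists of weighted evaluations
of polynomials of degree `< 2k - 1`, so it has dimension at most `2k - 1`. The MDS property comes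
from the root bound (a nonzero codeword vanishes in at most `k - 1` positions) together with the
Singleton bound.
-/

open Pointwise

/-- A finite set of naturals is an arithmetic progression if it is of the form
`{a, a + d, a + 2d, …, a + (ℓ-1)d}`. -/
def IsAPSet (I : Finset ℕ) : Prop :=
  ∃ a d : ℕ, I = (Finset.range I.card).image (fun j => a + j * d)

/-- The span of the monomials `x^i`, `i ∈ I`. -/
noncomputable def monomialSpace (F : Type*) [Field F] (I : Finset ℕ) : Submodule F (Polynomial F) :=
  Submodule.span F ((fun i => (Polynomial.X : Polynomial F) ^ i) '' (I : Set ℕ))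

/-- The evaluation code of a space of polynomials at the evaluation points `α`. -/
noncomputable def evalCode {F : Type*} [Field F] {n : ℕ} (α : Fin n → F)
    (V : Submodule F (Polynomial F)) : Submodule F (Fin n → F) :=
  V.map (LinearMap.pi fun i => Polynomial.leval (α i))

/-- The Schur square of a linear code: the span of componentwise products of codewords. -/
def schurSq {F : Type*} [Field F] {n : ℕ} (C : Submodule F (Fin n → F)) :
    Submodule F (Fin n → F) :=
  Submodule.span F {x | ∃ c ∈ C, ∃ c' ∈ C, x = c * c'}

/-- The generalized Reed–Solomon code of dimension (at most) `k` with evaluation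
points `α` and column multipliers `v`. -/
def grs {F : Type*} [Field F] {n : ℕ} (k : ℕ) (α v : Fin n → F) :
    Submodule F (Fin n → F) :=
  Submodule.span F
    {c | ∃ f : Polynomial F, f.natDegree < k ∧ c = fun i => v i * Polynomial.eval (α i) f}

open Polynomial Module

lemma exists_strictMono_range_image_eq (I : Finset ℕ) :
    ∃ a : ℕ → ℕ, StrictMono a ∧ (Finset.range I.card).image a = I := by
  let e := I.orderEmbOfFin rfl
  let a : ℕ → ℕ := fun i => if h : i < I.card then e ⟨i, h⟩ else I.sup id + 1 + i
  have he : ∀ i (h : i < I.card), e ⟨i, h⟩ ≤ I.sup id := fun i h =>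
    Finset.le_sup (f := id) (I.orderEmbOfFin_mem rfl _)
  have ha : StrictMono a := by
    refine strictMono_nat_of_lt_succ fun i => ?_
    by_cases h₁ : i + 1 < I.card
    · simp only [a, dif_pos h₁, dif_pos (Nat.lt_of_succ_lt h₁)]
      exact e.strictMono (Fin.mk_lt_mk.2 i.lt_succ_self)
    · by_cases h₀ : i < I.card
      · simp only [a, dif_neg h₁, dif_pos h₀]
        have := he i h₀
        omega
      · simp only [a, dif_neg h₁, dif_neg h₀]
        omega
  refine ⟨a, ha, Finset.eq_of_subset_of_card_le ?_ ?_⟩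
  · intro x hx
    obtain ⟨i, hi, rfl⟩ := Finset.mem_image.1 hx
    simp only [a, dif_pos (Finset.mem_range.1 hi)]
    exact I.orderEmbOfFin_mem rfl _
  · rw [Finset.card_image_of_injective _ ha.injective, Finset.card_range]

def sumChain (a : ℕ → ℕ) (m : ℕ) : ℕ := a (m / 2) + a ((m + 1) / 2)

lemma sumChain_two_mul (a : ℕ → ℕ) (i : ℕ) : sumChain a (2 * i) = a i + a i := by
  simp only [sumChain]
  congr 2 <;> omega

lemma sumChain_two_mul_add_one (a : ℕ → ℕ) (i : ℕ) :
    sumChain a (2 * i + 1) = a i + a (i + 1) := by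
  simp only [sumChain]
  congr 2 <;> omega

lemma StrictMono.sumChain {a : ℕ → ℕ} (ha : StrictMono a) : StrictMono (sumChain a) := by
  refine strictMono_nat_of_lt_succ fun m => ?_
  have hlt : a (m / 2) < a (m / 2 + 1) := ha (Nat.lt_succ_self _)
  simp only [_root_.sumChain, show (m + 1 + 1) / 2 = m / 2 + 1 by omega]
  omega

lemma StrictMono.eq_add_one_of_lt_of_lt {β : Type*} [LinearOrder β] {g : ℕ → β}
    (hg : StrictMono g) {m j : ℕ} (h₁ : g m < g j) (h₂ : g j < g (m + 2)) : j = m + 1 := by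
  have := hg.lt_iff_lt.1 h₁
  have := hg.lt_iff_lt.1 h₂
  omega

lemma add_add_eq_two_mul_of_card_add_self_lt {I : Finset ℕ} {a : ℕ → ℕ} (ha : StrictMono a)
    (haI : (Finset.range I.card).image a = I) (hcard : (I + I).card < 2 * I.card) {i : ℕ}
    (hi : i + 2 < I.card) : a i + a (i + 2) = 2 * a (i + 1) := by
  have mem : ∀ {j}, j < I.card → a j ∈ I := fun hj =>
    haI ▸ Finset.mem_image_of_mem a (Finset.mem_range.2 hj)
  set S := (Finset.range (2 * I.card - 1)).image (sumChain a)
  have hS : S ⊆ I + I := by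
    intro x hx
    obtain ⟨m, hm, rfl⟩ := Finset.mem_image.1 hx
    have := Finset.mem_range.1 hm
    exact Finset.add_mem_add (mem (by omega)) (mem (by omega))
  have hScard : S.card = 2 * I.card - 1 := by
    rw [Finset.card_image_of_injective _ ha.sumChain.injective, Finset.card_range]
  by_contra hne
  have hx : a i + a (i + 2) ∉ S := by
    intro hx
    obtain ⟨j, -, hj⟩ := Finset.mem_image.1 hx
    have h₁ : sumChain a (2 * i + 1) < sumChain a j := by
      rw [hj, sumChain_two_mul_add_one]
      have := ha (show i + 1 < i + 2 by omega)
      omega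
    have h₂ : sumChain a j < sumChain a (2 * i + 1 + 2) := by
      rw [hj, show 2 * i + 1 + 2 = 2 * (i + 1) + 1 by ring, sumChain_two_mul_add_one,
        show i + 1 + 1 = i + 2 from rfl]
      have := ha (show i < i + 1 by omega)
      omega
    rw [ha.sumChain.eq_add_one_of_lt_of_lt h₁ h₂, show 2 * i + 1 + 1 = 2 * (i + 1) by ring,
      sumChain_two_mul] at hj
    exact hne (by rw [← hj]; ring)
  have hsub : insert (a i + a (i + 2)) S ⊆ I + I :=
    Finset.insert_subset (Finset.add_mem_add (mem (by omega)) (mem hi)) hS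
  have := Finset.card_le_card hsub
  rw [Finset.card_insert_of_notMem hx] at this
  omega

lemma eq_add_mul_of_add_add_eq_two_mul {a : ℕ → ℕ} {k : ℕ} (h01 : a 0 ≤ a 1)
    (h : ∀ i, i + 2 < k → a i + a (i + 2) = 2 * a (i + 1)) :
    ∀ j < k, a j = a 0 + j * (a 1 - a 0) := by
  have step : ∀ j, j + 1 < k → a (j + 1) = a j + (a 1 - a 0) := by
    intro j hj
    induction j with
    | zero => show a 1 = a 0 + (a 1 - a 0); omega
    | succ j ih =>
      have := h j (by omega)
      have := ih (by omega)
      show a (j + 2) = a (j + 1) + (a 1 - a 0)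
      omega
  intro j hj
  induction j with
  | zero => simp
  | succ j ih => rw [step j hj, ih (by omega)]; ring

theorem two_mul_card_le_card_add_self_of_not_isAPSet {I : Finset ℕ} (hI : ¬IsAPSet I) :
    2 * I.card ≤ (I + I).card := by
  contrapose! hI
  obtain ⟨a, ha, haI⟩ := exists_strictMono_range_image_eq I
  have hlin := eq_add_mul_of_add_add_eq_two_mul (ha.monotone zero_le_one) fun i hi =>
    add_add_eq_two_mul_of_card_add_self_lt ha haI hI hi
  refine ⟨a 0, a 1 - a 0, ?_⟩
  calc I = (Finset.range I.card).image a := haI.symm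
    _ = _ := Finset.image_congr fun j hj => hlin j (Finset.mem_range.1 hj)

section Codes

variable {F : Type*} [Field F] {n : ℕ}

lemma finrank_monomialSpace (I : Finset ℕ) : finrank F (monomialSpace F I) = I.card := by
  have hli : LinearIndependent F fun i : (I : Set ℕ) => (X : F[X]) ^ (i : ℕ) := by
    convert (basisMonomials F).linearIndependent.comp _ Subtype.val_injective with i
    simp [X_pow_eq_monomial]
  rw [monomialSpace, Set.image_eq_range, finrank_span_eq_card hli]
  simp

lemma X_pow_mem_monomialSpace {I : Finset ℕ} {i : ℕ} (hi : i ∈ I) :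
    (X : F[X]) ^ i ∈ monomialSpace F I :=
  Submodule.subset_span ⟨i, hi, rfl⟩

lemma mem_evalCode {α : Fin n → F} {V : Submodule F F[X]} {c : Fin n → F} :
    c ∈ evalCode α V ↔ ∃ f ∈ V, (fun i => eval (α i) f) = c :=
  Iff.rfl

lemma hammingNorm_add_card_filter_eq_zero {ι β : Type*} [Fintype ι] [Zero β] [DecidableEq β]
    (x : ι → β) :
    hammingNorm x + (Finset.univ.filter fun i => x i = 0).card = Fintype.card ι := by
  rw [add_comm, hammingNorm, Finset.card_filter_add_card_filter_not, Finset.card_univ]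

section RootBound

variable [DecidableEq F] {α : Fin n → F} {V : Submodule F F[X]} {r : ℕ}

lemma le_hammingNorm_of_mem_evalCode
    (hroots : ∀ f ∈ V, f ≠ 0 → (Finset.univ.filter fun i => eval (α i) f = 0).card ≤ r)
    {c : Fin n → F} (hc : c ∈ evalCode α V) (hc0 : c ≠ 0) : n - r ≤ hammingNorm c := by
  obtain ⟨f, hf, rfl⟩ := mem_evalCode.1 hc
  have hf0 : f ≠ 0 := by
    rintro rfl
    exact hc0 (funext fun i => eval_zero)
  have hsum := hammingNorm_add_card_filter_eq_zero fun i => eval (α i) f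
  have := hroots f hf hf0
  rw [Fintype.card_fin] at hsum
  omega

lemma finrank_evalCode
    (hroots : ∀ f ∈ V, f ≠ 0 → (Finset.univ.filter fun i => eval (α i) f = 0).card ≤ r)
    (hrn : r < n) : finrank F (evalCode α V) = finrank F V := by
  have hinj : Function.Injective ((LinearMap.pi fun i => leval (α i)).domRestrict V) := by
    refine (injective_iff_map_eq_zero _).2 fun ⟨f, hf⟩ hf0 => ?_
    by_contra hne
    have hroot : ∀ i, eval (α i) f = 0 := fun i => congr_fun hf0 i
    have := hroots f hf (by simpa using hne)
    simp only [hroot, Finset.filter_true, Finset.card_univ, Fintype.card_fin] at this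
    omega
  rw [evalCode, ← LinearMap.range_domRestrict, LinearMap.finrank_range_of_inj hinj]

end RootBound

lemma exists_ne_zero_hammingNorm_add_finrank_le [DecidableEq F] {C : Submodule F (Fin n → F)}
    (hC : 0 < finrank F C) : ∃ c ∈ C, c ≠ 0 ∧ hammingNorm c + finrank F C ≤ n + 1 := by
  have hCn : finrank F C ≤ n := by simpa using C.finrank_le
  obtain ⟨S, -, hS⟩ := Finset.exists_subset_card_eq (s := (Finset.univ : Finset (Fin n)))
    (n := finrank F C - 1) (by simp only [Finset.card_univ, Fintype.card_fin]; omega)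
  let restrict : C →ₗ[F] (S → F) :=
    (LinearMap.funLeft F F (Subtype.val : S → Fin n)).comp C.subtype
  have hker : LinearMap.ker restrict ≠ ⊥ :=
    LinearMap.ker_ne_bot_of_finrank_lt (by
      rw [Module.finrank_fintype_fun_eq_card, Fintype.card_coe, hS]; omega)
  obtain ⟨⟨c, hc⟩, hcker, hc0⟩ := Submodule.exists_mem_ne_zero_of_ne_bot hker
  have hcS : ∀ i ∈ S, c i = 0 := fun i hi => congr_fun (LinearMap.mem_ker.1 hcker) ⟨i, hi⟩
  have hsupp : (Finset.univ.filter fun i => c i ≠ 0) ⊆ Sᶜ := fun i hi =>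
    Finset.mem_compl.2 fun hiS => (Finset.mem_filter.1 hi).2 (hcS i hiS)
  have := Finset.card_le_card hsupp
  rw [Finset.card_compl, Fintype.card_fin, hS] at this
  exact ⟨c, hc, by simpa using hc0, by rw [hammingNorm]; omega⟩

lemma mul_mem_schurSq {C : Submodule F (Fin n → F)} {c c' : Fin n → F} (hc : c ∈ C)
    (hc' : c' ∈ C) : c * c' ∈ schurSq C :=
  Submodule.subset_span ⟨c, hc, c', hc', rfl⟩

lemma schurSq_mono {C D : Submodule F (Fin n → F)} (h : C ≤ D) : schurSq C ≤ schurSq D :=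
  Submodule.span_mono fun _ ⟨c, hc, c', hc', hx⟩ => ⟨c, h hc, c', h hc', hx⟩

lemma card_add_self_le_finrank_schurSq_evalCode {α : Fin n → F} {I : Finset ℕ}
    (hind : LinearIndependent F
      (fun j : (I + I : Finset ℕ) => (fun i : Fin n => (α i) ^ (j : ℕ)))) :
    (I + I).card ≤ finrank F (schurSq (evalCode α (monomialSpace F I))) := by
  have hpow : ∀ j ∈ I + I, (fun i => α i ^ j) ∈ schurSq (evalCode α (monomialSpace F I)) := by
    intro j hj
    obtain ⟨b, hb, c, hc, rfl⟩ := Finset.mem_add.1 hj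
    convert mul_mem_schurSq (mem_evalCode.2 ⟨_, X_pow_mem_monomialSpace hb, rfl⟩)
      (mem_evalCode.2 ⟨_, X_pow_mem_monomialSpace hc, rfl⟩) using 1
    funext i
    simp [pow_add]
  calc (I + I).card = finrank F (Submodule.span F (Set.range
        fun j : (I + I : Finset ℕ) => (fun i : Fin n => (α i) ^ (j : ℕ)))) := by
        rw [finrank_span_eq_card hind, Fintype.card_coe]
    _ ≤ _ := Submodule.finrank_mono (Submodule.span_le.2 (Set.range_subset_iff.2 fun j =>
        hpow j j.2))

noncomputable def weightedEval (β v : Fin n → F) : F[X] →ₗ[F] Fin n → F :=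
  LinearMap.pi fun i => v i • leval (β i)

lemma weightedEval_apply (β v : Fin n → F) (f : F[X]) :
    weightedEval β v f = fun i => v i * eval (β i) f :=
  rfl

lemma weightedEval_mul_weightedEval (β v w : Fin n → F) (f g : F[X]) :
    weightedEval β v f * weightedEval β w g = weightedEval β (v * w) (f * g) := by
  funext i
  simp only [weightedEval_apply, Pi.mul_apply, eval_mul]
  ring

lemma grs_le_map_degreeLT (k : ℕ) (β v : Fin n → F) :
    grs k β v ≤ (degreeLT F k).map (weightedEval β v) := by
  refine Submodule.span_le.2 ?_
  rintro _ ⟨f, hf, rfl⟩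
  exact ⟨f, mem_degreeLT.2 (degree_le_natDegree.trans_lt (WithBot.coe_lt_coe.2 hf)), rfl⟩

lemma mul_mem_degreeLT {R : Type*} [Semiring R] {k : ℕ} {f g : R[X]} (hf : f ∈ degreeLT R k)
    (hg : g ∈ degreeLT R k) : f * g ∈ degreeLT R (2 * k - 1) := by
  cases k with
  | zero =>
    rw [mem_degreeLT, Nat.cast_zero, Nat.WithBot.lt_zero_iff, degree_eq_bot] at hf
    simp [hf]
  | succ m =>
    rw [show 2 * (m + 1) - 1 = 2 * m + 1 by omega, degreeLT_succ_eq_degreeLE, mem_degreeLE]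
    rw [degreeLT_succ_eq_degreeLE, mem_degreeLE] at hf hg
    exact (degree_mul_le_of_le hf hg).trans_eq (by norm_cast; ring_nf)

lemma schurSq_map_degreeLT_le (k : ℕ) (β v : Fin n → F) :
    schurSq ((degreeLT F k).map (weightedEval β v)) ≤
      (degreeLT F (2 * k - 1)).map (weightedEval β (v * v)) := by
  refine Submodule.span_le.2 ?_
  rintro _ ⟨_, ⟨f, hf, rfl⟩, _, ⟨g, hg, rfl⟩, rfl⟩
  exact ⟨f * g, mul_mem_degreeLT hf hg, (weightedEval_mul_weightedEval β v v f g).symm⟩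

lemma finrank_schurSq_grs_le (k : ℕ) (β v : Fin n → F) :
    finrank F (schurSq (grs k β v)) ≤ 2 * k - 1 :=
  calc finrank F (schurSq (grs k β v))
      ≤ finrank F ((degreeLT F (2 * k - 1)).map (weightedEval β (v * v))) :=
        Submodule.finrank_mono
          ((schurSq_mono (grs_le_map_degreeLT k β v)).trans (schurSq_map_degreeLT_le k β v))
    _ ≤ finrank F (degreeLT F (2 * k - 1)) := Submodule.finrank_map_le _ _
    _ = 2 * k - 1 := by rw [finrank_eq_card_basis (degreeLT.basis F _), Fintype.card_fin]

end Codes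

theorem evalCode_nonRS_MDS_general {F : Type*} [Field F] [DecidableEq F]
    {n k : ℕ} (hk : 3 ≤ k) (hkn : 2 * k ≤ n)
    (I : Finset ℕ) (hI : I.card = k) (hAP : ¬ IsAPSet I)
    (α : Fin n → F)
    (hroots : ∀ f ∈ monomialSpace F I, f ≠ 0 →
      (Finset.univ.filter fun i => Polynomial.eval (α i) f = 0).card ≤ k - 1)
    (hind : LinearIndependent F
      (fun j : (I + I : Finset ℕ) => (fun i : Fin n => (α i) ^ (j : ℕ)))) :
    Module.finrank F (evalCode α (monomialSpace F I)) = k ∧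
      (∀ c ∈ evalCode α (monomialSpace F I), c ≠ 0 → n - k + 1 ≤ hammingNorm c) ∧
      (∃ c ∈ evalCode α (monomialSpace F I), c ≠ 0 ∧ hammingNorm c = n - k + 1) ∧
      2 * k ≤ Module.finrank F (schurSq (evalCode α (monomialSpace F I))) ∧
      ∀ (β v : Fin n → F), Function.Injective β → (∀ i, v i ≠ 0) →
        evalCode α (monomialSpace F I) ≠ grs k β v := by
  have hdim : finrank F (evalCode α (monomialSpace F I)) = k := by
    rw [finrank_evalCode hroots (by omega), finrank_monomialSpace, hI]
  have hweight : ∀ c ∈ evalCode α (monomialSpace F I), c ≠ 0 → n - k + 1 ≤ hammingNorm c :=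
    fun c hc hc0 => (le_hammingNorm_of_mem_evalCode hroots hc hc0).trans' (by omega)
  have hschur : 2 * k ≤ finrank F (schurSq (evalCode α (monomialSpace F I))) :=
    hI ▸ (two_mul_card_le_card_add_self_of_not_isAPSet hAP).trans
      (card_add_self_le_finrank_schurSq_evalCode hind)
  refine ⟨hdim, hweight, ?_, hschur, fun β v _ _ hgrs => ?_⟩
  · obtain ⟨c, hc, hc0, hle⟩ := exists_ne_zero_hammingNorm_add_finrank_le
      (C := evalCode α (monomialSpace F I)) (by omega)
    exact ⟨c, hc, hc0, le_antisymm (by omega) (hweight c hc hc0)⟩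
  · have := finrank_schurSq_grs_le k β v
    rw [← hgrs] at this
    omega

theorem evalCode_nonRS_MDS {F : Type*} [Field F] [Fintype F] [DecidableEq F]
    {n k q : ℕ} (hq : Fintype.card F = q) (hk : 3 ≤ k) (hkn : 2 * k ≤ n)
    (I : Finset ℕ) (hI : I.card = k) (hAP : ¬ IsAPSet I)
    (α : Fin n → F) (hα : Function.Injective α)
    (hroots : ∀ f ∈ monomialSpace F I, f ≠ 0 →
      (Finset.univ.filter fun i => Polynomial.eval (α i) f = 0).card ≤ k - 1)
    (hmax : ∀ j ∈ I + I, j ≤ q - 2) (hcardII : (I + I).card ≤ n)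
    (hind : LinearIndependent F
      (fun j : (I + I : Finset ℕ) => (fun i : Fin n => (α i) ^ (j : ℕ)))) :
    Module.finrank F (evalCode α (monomialSpace F I)) = k ∧
      (∀ c ∈ evalCode α (monomialSpace F I), c ≠ 0 → n - k + 1 ≤ hammingNorm c) ∧
      (∃ c ∈ evalCode α (monomialSpace F I), c ≠ 0 ∧ hammingNorm c = n - k + 1) ∧
      2 * k ≤ Module.finrank F (schurSq (evalCode α (monomialSpace F I))) ∧
      ∀ (β v : Fin n → F), Function.Injective β → (∀ i, v i ≠ 0) →
        evalCode α (monomialSpace F I) ≠ grs k β v :=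
  evalCode_nonRS_MDS_general hk hkn I hI hAP α hroots hind
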